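/- arXiv:0806.1757 — 5 statements merged into one kernel-verified Lean document; each statement's English description precedes it below -/
import Mathlib

section
/- The function p(θ,t) = λ·(1/(1 - e^{2λt}) - sin²(θ + γ)), defined for t < 0, λ > 0, and any fixed angle γ, satisfies the pressure equation p_t = p·p_θθ - (1/2)·p_θ² + 2p². -/
/-! The time factor `u = 1/(1 - e^{2λt})` solves the logistic equation `u' = 2λ u (u - 1)`.
For a profile `p = λ(C - sin²φ)` with `C` constant, `p_θ = -λ sin 2φ` and `p_θθ = -2λ cos 2φ`,
and the right-hand side of the pressure equation collapses to `2λ² C (C - 1)` because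
`sin² + cos² = 1`. With `C = u` the two sides agree. -/

open Real

lemma hasDerivAt_one_div_one_sub_exp_mul {c t : ℝ} (h : exp (c * t) ≠ 1) :
    HasDerivAt (fun s => 1 / (1 - exp (c * s)))
      (c * (1 / (1 - exp (c * t))) * (1 / (1 - exp (c * t)) - 1)) t := by
  have hne : 1 - exp (c * t) ≠ 0 := sub_ne_zero.2 h.symm
  have hder := ((((hasDerivAt_id t).const_mul c).exp).const_sub 1).inv hne
  simp only [id, mul_one] at hder
  rw [show (fun s => 1 / (1 - exp (c * s))) = (fun s => 1 - exp (c * s))⁻¹ by ext; simp]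
  refine hder.congr_deriv ?_
  field_simp
  ring

lemma hasDerivAt_sin_add_sq (γ x : ℝ) :
    HasDerivAt (fun x => sin (x + γ) ^ 2) (sin (2 * (x + γ))) x := by
  refine (((hasDerivAt_id x).add_const γ).sin.pow 2).congr_deriv ?_
  rw [sin_two_mul]
  simp only [id, mul_one]
  ring

lemma deriv_mul_const_sub_sin_add_sq (lam γ C : ℝ) :
    deriv (fun x => lam * (C - sin (x + γ) ^ 2)) = fun x => -lam * sin (2 * (x + γ)) := by
  funext x
  rw [(((hasDerivAt_sin_add_sq γ x).const_sub C).const_mul lam).deriv]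
  ring

lemma deriv_neg_mul_sin_two_mul_add (lam γ x : ℝ) :
    deriv (fun x => -lam * sin (2 * (x + γ))) x = -2 * lam * cos (2 * (x + γ)) := by
  have hinner : HasDerivAt (fun x => 2 * (x + γ)) 2 x := by
    simpa using ((hasDerivAt_id x).add_const γ).const_mul 2
  rw [(hinner.sin.const_mul (-lam)).deriv]
  ring

lemma pressure_rhs_of_sin_sq_profile (lam C φ : ℝ) :
    lam * (C - sin φ ^ 2) * (-2 * lam * cos (2 * φ)) - 1 / 2 * (-lam * sin (2 * φ)) ^ 2
      + 2 * (lam * (C - sin φ ^ 2)) ^ 2 = 2 * lam ^ 2 * C * (C - 1) := by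
  rw [sin_two_mul, cos_two_mul]
  linear_combination 2 * lam ^ 2 * (sin φ ^ 2 - 2 * C) * sin_sq_add_cos_sq φ

/-- The Angenent oval pressure `p(θ,t) = λ(1/(1-e^{2λt}) - sin²(θ+γ))` satisfies
`p_t = p p_θθ - (1/2) p_θ² + 2p²` for `t < 0`. -/
theorem angenent_oval_solves_pressure (lam γ : ℝ) (hlam : 0 < lam) :
    ∀ θ t : ℝ, t < 0 →
      deriv (fun s : ℝ => lam * (1 / (1 - Real.exp (2 * lam * s)) - Real.sin (θ + γ) ^ 2)) t
        = (lam * (1 / (1 - Real.exp (2 * lam * t)) - Real.sin (θ + γ) ^ 2)) *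
            deriv (deriv (fun x : ℝ =>
              lam * (1 / (1 - Real.exp (2 * lam * t)) - Real.sin (x + γ) ^ 2))) θ
          - (1 / 2) * (deriv (fun x : ℝ =>
              lam * (1 / (1 - Real.exp (2 * lam * t)) - Real.sin (x + γ) ^ 2)) θ) ^ 2
          + 2 * (lam * (1 / (1 - Real.exp (2 * lam * t)) - Real.sin (θ + γ) ^ 2)) ^ 2 := by
  intro θ t ht
  have hexp : exp (2 * lam * t) ≠ 1 := (exp_lt_one_iff.2 (by nlinarith)).ne
  rw [deriv_mul_const_sub_sin_add_sq, deriv_neg_mul_sin_two_mul_add,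
    pressure_rhs_of_sin_sq_profile,
    (((hasDerivAt_one_div_one_sub_exp_mul hexp).sub_const _).const_mul lam).deriv]
  ring
end

section
/- Let p be a smooth positive 2π-periodic function of θ satisfying p·p_θθ - (1/2)·p_θ² + 2p² ≥ 0 pointwise, and suppose p ≤ C on [0,2π]. Then |p_θ| ≤ 2C on [0,2π]. -/
open Real

/-- Gradient bound: a smooth positive 2π-periodic `p ≤ C` with
`p p'' - (1/2)(p')² + 2p² ≥ 0` satisfies `|p'| ≤ 2C` on `[0, 2π]`. -/
theorem gradient_bound (p : ℝ → ℝ) (C : ℝ)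
    (hsmooth : ContDiff ℝ (⊤ : ℕ∞) p)
    (hpos : ∀ θ : ℝ, 0 < p θ)
    (hper : ∀ θ : ℝ, p (θ + 2 * π) = p θ)
    (hineq : ∀ θ : ℝ, 0 ≤ p θ * deriv (deriv p) θ - (1 / 2) * (deriv p θ) ^ 2 + 2 * (p θ) ^ 2)
    (hbd : ∀ θ ∈ Set.Icc (0:ℝ) (2 * π), p θ ≤ C) :
    ∀ θ ∈ Set.Icc (0:ℝ) (2 * π), |deriv p θ| ≤ 2 * C := by
  have hC : 0 < C := lt_of_lt_of_le (hpos 0)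
    (hbd 0 ⟨le_refl _, by positivity⟩)
  have hd1 := (contDiff_infty_iff_deriv.mp (hsmooth.of_le (by simp))).2
  have hdiff1 : Differentiable ℝ (deriv p) := (contDiff_infty_iff_deriv.mp hd1).1
  set g : ℝ → ℝ := fun θ => (deriv p θ) ^ 2 with hg
  have hgcont : Continuous g := (hd1.continuous).pow 2
  have hpper : Function.Periodic p (2 * π) := hper
  have hdper : Function.Periodic (deriv p) (2 * π) := by
    intro x
    have : deriv (fun y => p (y + 2 * π)) x = deriv p x := by
      rw [show (fun y => p (y + 2 * π)) = p from funext hper]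
    rw [← this, deriv_comp_add_const]
  have hgper : Function.Periodic g (2 * π) := fun x => by
    simp only [hg, hdper x]
  -- max of g on [0, 2π]
  obtain ⟨θ₀, hθ₀, hmax⟩ := (isCompact_Icc (a := (0:ℝ)) (b := 2 * π)).exists_isMaxOn
    (Set.nonempty_Icc.mpr (by positivity)) (hgcont.continuousOn)
  have hglobal : ∀ x, g x ≤ g θ₀ := by
    intro x
    obtain ⟨y, hy, hxy⟩ := hgper.exists_mem_Ico₀ Real.two_pi_pos x
    rw [hxy]
    exact hmax ⟨hy.1, le_of_lt hy.2⟩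
  -- deriv of g at θ₀ is zero
  have hder : HasDerivAt g (2 * deriv p θ₀ * deriv (deriv p) θ₀) θ₀ := by
    have := ((hdiff1 θ₀).hasDerivAt).pow 2
    simp at this
    exact this
  have hloc : IsLocalMax g θ₀ := Filter.Eventually.of_forall hglobal
  have hzero : 2 * deriv p θ₀ * deriv (deriv p) θ₀ = 0 := by
    have := hloc.deriv_eq_zero
    rwa [hder.deriv] at this
  have hkey : g θ₀ ≤ 4 * C ^ 2 := by
    rcases mul_eq_zero.mp hzero with h | h
    · rcases mul_eq_zero.mp h with h2 | h2
      · norm_num at h2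
      · simp only [hg, h2]
        nlinarith
    · have h1 := hineq θ₀
      rw [h, mul_zero] at h1
      have hp : p θ₀ ≤ C := hbd θ₀ hθ₀
      have hp0 : 0 < p θ₀ := hpos θ₀
      have : (deriv p θ₀) ^ 2 ≤ 4 * (p θ₀) ^ 2 := by nlinarith
      have : (p θ₀) ^ 2 ≤ C ^ 2 := by nlinarith
      simp only [hg]
      nlinarith
  intro θ hθ
  have h1 : (deriv p θ) ^ 2 ≤ (2 * C) ^ 2 := by
    have := le_trans (hglobal θ) hkey
    simp only [hg] at this
    nlinarith
  rw [abs_le]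
  constructor <;> nlinarith
end

section
/- Let p̃ be a strictly positive C² function on an open interval I satisfying p̃·p̃'' - (1/2)(p̃')² + 2p̃² = 0 and (p̃')²/p̃ + 4p̃ = C for a constant C > 0. Then there exists b such that p̃(θ) = (C/4)·cos²(θ + b) on I. -/
/-!
Writing `u = √p̃`, the pressure equation becomes the harmonic oscillator `u'' = -u` (with
`u' = p̃'/(2√p̃)`), so `u = a cos θ + b sin θ = √(a² + b²) cos (θ + φ)`. The conserved quantity is
`(p̃')²/p̃ + 4p̃ = 4 (u² + u'²) = 4 (a² + b²)`, which fixes the amplitude: `a² + b² = C/4`.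
-/

open Real

lemma exists_eq_cos_sin_of_hasDerivAt {s : Set ℝ} (hs : IsOpen s) (hs' : IsPreconnected s)
    {u v : ℝ → ℝ} (hu : ∀ θ ∈ s, HasDerivAt u (v θ) θ) (hv : ∀ θ ∈ s, HasDerivAt v (-u θ) θ) :
    ∃ a b : ℝ, ∀ θ ∈ s, u θ = a * cos θ + b * sin θ ∧ v θ = b * cos θ - a * sin θ := by
  have const_of_deriv_zero : ∀ F : ℝ → ℝ, (∀ θ ∈ s, HasDerivAt F 0 θ) → ∃ c, ∀ θ ∈ s, F θ = c :=
    fun F hF => hs.exists_is_const_of_deriv_eq_zero hs'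
      (fun θ hθ => (hF θ hθ).differentiableAt.differentiableWithinAt)
      (fun θ hθ => (hF θ hθ).deriv)
  obtain ⟨a, ha⟩ := const_of_deriv_zero (fun θ => u θ * cos θ - v θ * sin θ) fun θ hθ =>
    (((hu θ hθ).mul (hasDerivAt_cos θ)).sub ((hv θ hθ).mul (hasDerivAt_sin θ))).congr_deriv
      (by ring)
  obtain ⟨b, hb⟩ := const_of_deriv_zero (fun θ => u θ * sin θ + v θ * cos θ) fun θ hθ =>
    (((hu θ hθ).mul (hasDerivAt_sin θ)).add ((hv θ hθ).mul (hasDerivAt_cos θ))).congr_deriv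
      (by ring)
  refine ⟨a, b, fun θ hθ => ⟨?_, ?_⟩⟩
  · linear_combination cos θ * ha θ hθ + sin θ * hb θ hθ - u θ * sin_sq_add_cos_sq θ
  · linear_combination cos θ * hb θ hθ - sin θ * ha θ hθ - v θ * sin_sq_add_cos_sq θ

lemma exists_mul_cos_add_mul_sin_eq (a b : ℝ) :
    ∃ φ : ℝ, ∀ θ, a * cos θ + b * sin θ = √(a ^ 2 + b ^ 2) * cos (θ + φ) := by
  set z : ℂ := ⟨a, -b⟩
  have hz : ‖z‖ = √(a ^ 2 + b ^ 2) := by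
    rw [Complex.norm_def, Complex.normSq_apply]; simp only [z]; ring_nf
  refine ⟨z.arg, fun θ => ?_⟩
  have hre := Complex.norm_mul_cos_arg z
  have him := Complex.norm_mul_sin_arg z
  rw [← hz, cos_add]
  linear_combination -(cos θ * hre) + sin θ * him

lemma hasDerivAt_div_two_sqrt {p dp : ℝ → ℝ} {θ d2p : ℝ} (hp : HasDerivAt p (dp θ) θ)
    (hdp : HasDerivAt dp d2p θ) (hpos : 0 < p θ)
    (heq : p θ * d2p - 1 / 2 * dp θ ^ 2 + 2 * p θ ^ 2 = 0) :
    HasDerivAt (fun t => dp t / (2 * √(p t))) (-√(p θ)) θ := by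
  have hsqrt : 0 < √(p θ) := sqrt_pos.2 hpos
  refine (hdp.div ((hp.sqrt hpos.ne').const_mul 2) (by positivity)).congr_deriv ?_
  have hsq : √(p θ) ^ 2 = p θ := sq_sqrt hpos.le
  field_simp
  linear_combination 2 * heq + (2 * d2p + 4 * (√(p θ) ^ 2 + p θ)) * hsq

theorem steady_state_form_general (ptilde : ℝ → ℝ) (x y C : ℝ)
    (hsmooth : ContDiffOn ℝ 2 ptilde (Set.Ioo x y))
    (hpos : ∀ θ ∈ Set.Ioo x y, 0 < ptilde θ)
    (heq : ∀ θ ∈ Set.Ioo x y,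
      ptilde θ * deriv (deriv ptilde) θ - (1 / 2) * (deriv ptilde θ) ^ 2
        + 2 * (ptilde θ) ^ 2 = 0)
    (hcons : ∀ θ ∈ Set.Ioo x y,
      (deriv ptilde θ) ^ 2 / ptilde θ + 4 * ptilde θ = C) :
    ∃ b : ℝ, ∀ θ ∈ Set.Ioo x y, ptilde θ = (C / 4) * Real.cos (θ + b) ^ 2 := by
  have hderiv : ∀ θ ∈ Set.Ioo x y, HasDerivAt ptilde (deriv ptilde θ) θ := fun θ hθ =>
    (hsmooth.differentiableOn two_ne_zero θ hθ).differentiableAt (isOpen_Ioo.mem_nhds hθ)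
      |>.hasDerivAt
  have hderiv2 : ∀ θ ∈ Set.Ioo x y,
      HasDerivAt (deriv ptilde) (deriv (deriv ptilde) θ) θ := fun θ hθ =>
    ((hsmooth.deriv_of_isOpen isOpen_Ioo (by norm_num)).differentiableOn one_ne_zero θ hθ)
      |>.differentiableAt (isOpen_Ioo.mem_nhds hθ) |>.hasDerivAt
  obtain ⟨a, b, hab⟩ := exists_eq_cos_sin_of_hasDerivAt isOpen_Ioo isPreconnected_Ioo
    (fun θ hθ => (hderiv θ hθ).sqrt (hpos θ hθ).ne')
    (fun θ hθ => hasDerivAt_div_two_sqrt (hderiv θ hθ) (hderiv2 θ hθ) (hpos θ hθ) (heq θ hθ))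
  obtain ⟨φ, hφ⟩ := exists_mul_cos_add_mul_sin_eq a b
  refine ⟨φ, fun θ hθ => ?_⟩
  obtain ⟨hu, hv⟩ := hab θ hθ
  have hsq : √(ptilde θ) ^ 2 = ptilde θ := sq_sqrt (hpos θ hθ).le
  have hamp : a ^ 2 + b ^ 2 = C / 4 :=
    calc a ^ 2 + b ^ 2 = √(ptilde θ) ^ 2 + (deriv ptilde θ / (2 * √(ptilde θ))) ^ 2 := by
          rw [hv, hu]; linear_combination -(a ^ 2 + b ^ 2) * sin_sq_add_cos_sq θ
      _ = C / 4 := by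
          rw [← hcons θ hθ, div_pow, mul_pow, hsq]; field_simp; ring
  rw [← hsq, hu, hφ, mul_pow, sq_sqrt (by positivity), hamp]

/-- A positive `C²` solution of the steady-state pressure equation whose conserved quantity
`(p̃')²/p̃ + 4p̃` equals `C > 0` has the form `p̃(θ) = (C/4) cos²(θ + b)`. -/
theorem steady_state_form (ptilde : ℝ → ℝ) (x y C : ℝ) (hC : 0 < C)
    (hsmooth : ContDiffOn ℝ 2 ptilde (Set.Ioo x y))
    (hpos : ∀ θ ∈ Set.Ioo x y, 0 < ptilde θ)
    (heq : ∀ θ ∈ Set.Ioo x y,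
      ptilde θ * deriv (deriv ptilde) θ - (1 / 2) * (deriv ptilde θ) ^ 2
        + 2 * (ptilde θ) ^ 2 = 0)
    (hcons : ∀ θ ∈ Set.Ioo x y,
      (deriv ptilde θ) ^ 2 / ptilde θ + 4 * ptilde θ = C) :
    ∃ b : ℝ, ∀ θ ∈ Set.Ioo x y, ptilde θ = (C / 4) * Real.cos (θ + b) ^ 2 :=
  steady_state_form_general ptilde x y C hsmooth hpos heq hcons
end

section
/- Let α(θ,t) be a smooth 2π-periodic (in θ) solution of α_t = p·(α_θθ + 4α), where p(θ,t) > 0 is smooth. Define I(α(t)) = ∫₀^{2π}(α_θ² - 4α²) dθ. Then d/dt I(α(t)) = -2∫₀^{2π} (α_t²/p) dθ; in particular I(α(t)) is non-increasing. -/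
open Real

private lemma hasDerivAt_fst' (f : ℝ × ℝ → ℝ) (hf : ContDiff ℝ (⊤ : ℕ∞) f) (θ t : ℝ) :
    HasDerivAt (fun x => f (x, t)) (fderiv ℝ f (θ, t) (1, 0)) θ :=
  (hf.differentiable (by simp) (θ, t)).hasFDerivAt.comp_hasDerivAt θ
    ((hasDerivAt_id θ).prodMk (hasDerivAt_const θ t))

private lemma hasDerivAt_snd' (f : ℝ × ℝ → ℝ) (hf : ContDiff ℝ (⊤ : ℕ∞) f) (θ t : ℝ) :
    HasDerivAt (fun s => f (θ, s)) (fderiv ℝ f (θ, t) (0, 1)) t :=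
  (hf.differentiable (by simp) (θ, t)).hasFDerivAt.comp_hasDerivAt t
    ((hasDerivAt_const t θ).prodMk (hasDerivAt_id t))

private lemma contDiff_fderiv_apply' (f : ℝ × ℝ → ℝ) (hf : ContDiff ℝ (⊤ : ℕ∞) f) (v : ℝ × ℝ) :
    ContDiff ℝ (⊤ : ℕ∞) (fun q => fderiv ℝ f q v) :=
  (ContinuousLinearMap.apply ℝ ℝ v).contDiff.comp (hf.fderiv_right (by simp))

private lemma fderiv_fderiv_apply' (f : ℝ × ℝ → ℝ) (hf : ContDiff ℝ (⊤ : ℕ∞) f) (x v w : ℝ × ℝ) :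
    fderiv ℝ (fun q => fderiv ℝ f q v) x w = fderiv ℝ (fderiv ℝ f) x w v := by
  have h1 : HasFDerivAt (fderiv ℝ f) (fderiv ℝ (fderiv ℝ f) x) x :=
    ((hf.fderiv_right (m := (⊤ : ℕ∞)) (by simp)).differentiable (by simp) x).hasFDerivAt
  have h2 : HasFDerivAt (fun q => fderiv ℝ f q v)
      ((ContinuousLinearMap.apply ℝ ℝ v).comp (fderiv ℝ (fderiv ℝ f) x)) x :=
    (ContinuousLinearMap.apply ℝ ℝ v).hasFDerivAt.comp x h1
  rw [h2.fderiv]; rfl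

private lemma fderiv_symm' (f : ℝ × ℝ → ℝ) (hf : ContDiff ℝ (⊤ : ℕ∞) f) (x v w : ℝ × ℝ) :
    fderiv ℝ (fun q => fderiv ℝ f q v) x w = fderiv ℝ (fun q => fderiv ℝ f q w) x v := by
  rw [fderiv_fderiv_apply' f hf, fderiv_fderiv_apply' f hf]
  exact (hf.contDiffAt.isSymmSndFDerivAt (by simp [minSmoothness_of_isRCLikeNormedField]; exact WithTop.coe_le_coe.mpr le_top)).eq w v

/-- The functional `I(α(t)) = ∫₀^{2π}(α_θ² - 4α²) dθ` of a smooth 2π-periodic solution of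
`α_t = p(α_θθ + 4α)` (with `p > 0` smooth) satisfies
`d/dt I(α(t)) = -2 ∫₀^{2π} α_t²/p dθ`; in particular it is non-increasing. -/
theorem functional_I_monotone (α p : ℝ → ℝ → ℝ)
    (hα : ContDiff ℝ (⊤ : ℕ∞) (Function.uncurry α))
    (hp : ContDiff ℝ (⊤ : ℕ∞) (Function.uncurry p))
    (hpos : ∀ θ t : ℝ, 0 < p θ t)
    (hper : ∀ θ t : ℝ, α (θ + 2 * π) t = α θ t)
    (heq : ∀ θ t : ℝ,
      deriv (fun s : ℝ => α θ s) t
        = p θ t * (deriv (deriv (fun x : ℝ => α x t)) θ + 4 * α θ t)) :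
    (∀ t : ℝ,
      deriv (fun s : ℝ =>
          ∫ θ in (0:ℝ)..(2 * π),
            ((deriv (fun x : ℝ => α x s) θ) ^ 2 - 4 * (α θ s) ^ 2)) t
        = -2 * ∫ θ in (0:ℝ)..(2 * π), (deriv (fun s : ℝ => α θ s) t) ^ 2 / p θ t)
    ∧ Antitone (fun t : ℝ =>
        ∫ θ in (0:ℝ)..(2 * π),
          ((deriv (fun x : ℝ => α x t) θ) ^ 2 - 4 * (α θ t) ^ 2)) := by
  have hA : ContDiff ℝ (⊤ : ℕ∞) (Function.uncurry α) := hα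
  set A : ℝ × ℝ → ℝ := Function.uncurry α with hA_def
  set aθ : ℝ × ℝ → ℝ := fun q => fderiv ℝ A q (1, 0) with haθ_def
  set at' : ℝ × ℝ → ℝ := fun q => fderiv ℝ A q (0, 1) with hat_def
  set aθθ : ℝ × ℝ → ℝ := fun q => fderiv ℝ aθ q (1, 0) with haθθ_def
  set aθt : ℝ × ℝ → ℝ := fun q => fderiv ℝ aθ q (0, 1) with haθt_def
  have haθ : ContDiff ℝ (⊤ : ℕ∞) aθ := contDiff_fderiv_apply' A hA _
  have hat : ContDiff ℝ (⊤ : ℕ∞) at' := contDiff_fderiv_apply' A hA _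
  have hDx : ∀ θ t : ℝ, HasDerivAt (fun x => α x t) (aθ (θ, t)) θ := fun θ t =>
    hasDerivAt_fst' A hA θ t
  have hDt : ∀ θ t : ℝ, HasDerivAt (fun s => α θ s) (at' (θ, t)) t := fun θ t =>
    hasDerivAt_snd' A hA θ t
  have hderivx : ∀ θ t : ℝ, deriv (fun x => α x t) θ = aθ (θ, t) := fun θ t => (hDx θ t).deriv
  have hderivt : ∀ θ t : ℝ, deriv (fun s => α θ s) t = at' (θ, t) := fun θ t => (hDt θ t).deriv
  have hDxx : ∀ θ t : ℝ, HasDerivAt (fun x => aθ (x, t)) (aθθ (θ, t)) θ := fun θ t =>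
    hasDerivAt_fst' aθ haθ θ t
  have hderivxx : ∀ θ t : ℝ, deriv (deriv (fun x => α x t)) θ = aθθ (θ, t) := by
    intro θ t
    have hfun : (deriv fun x => α x t) = fun x => aθ (x, t) := funext fun x => hderivx x t
    rw [hfun]
    exact (hDxx θ t).deriv
  have hpde : ∀ θ t : ℝ, at' (θ, t) = p θ t * (aθθ (θ, t) + 4 * α θ t) := by
    intro θ t
    rw [← hderivt, ← hderivxx]
    exact heq θ t
  have hDθt : ∀ θ t : ℝ, HasDerivAt (fun s => aθ (θ, s)) (aθt (θ, t)) t := fun θ t =>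
    hasDerivAt_snd' aθ haθ θ t
  have hDtθ : ∀ θ t : ℝ, HasDerivAt (fun x => at' (x, t)) (aθt (θ, t)) θ := by
    intro θ t
    have h := hasDerivAt_fst' at' hat θ t
    rwa [hat_def, fderiv_symm' A hA (θ, t) (0, 1) (1, 0)] at h
  -- periodicity of the derivatives
  have hper_aθ : ∀ θ t : ℝ, aθ (θ + 2 * π, t) = aθ (θ, t) := by
    intro θ t
    have h1 : HasDerivAt (fun x => α x t) (aθ (θ + 2 * π, t)) (θ + 2 * π) := hDx _ t
    have h2 : HasDerivAt (fun x => α (x + 2 * π) t) (aθ (θ + 2 * π, t)) θ :=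
      HasDerivAt.comp_add_const θ (2 * π) h1
    have h3 : (fun x => α (x + 2 * π) t) = fun x => α x t := funext fun x => hper x t
    rw [h3] at h2
    exact h2.unique (hDx θ t)
  have hper_at : ∀ θ t : ℝ, at' (θ + 2 * π, t) = at' (θ, t) := by
    intro θ t
    rw [← hderivt, ← hderivt]
    have : (fun s => α (θ + 2 * π) s) = fun s => α θ s := funext fun s => hper θ s
    rw [this]
  -- continuity helpers
  have contθ : ∀ (f : ℝ × ℝ → ℝ), Continuous f → ∀ s : ℝ, Continuous fun x : ℝ => f (x, s) :=
    fun f hf s => hf.comp (continuous_id.prodMk continuous_const)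
  have hA_cont : Continuous A := hA.continuous
  have haθ_cont : Continuous aθ := haθ.continuous
  have hat_cont : Continuous at' := hat.continuous
  have haθθ_cont : Continuous aθθ := (contDiff_fderiv_apply' aθ haθ _).continuous
  have haθt_cont : Continuous aθt := (contDiff_fderiv_apply' aθ haθ _).continuous
  have hp_cont : ∀ s : ℝ, Continuous fun x : ℝ => p x s := fun s =>
    contθ (Function.uncurry p) hp.continuous s
  have hαθ_cont : ∀ s : ℝ, Continuous fun x : ℝ => α x s := fun s => contθ A hA_cont s
  -- main derivative computation
  have key : ∀ t₀ : ℝ,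
      HasDerivAt (fun s : ℝ =>
          ∫ θ in (0:ℝ)..(2 * π),
            ((deriv (fun x : ℝ => α x s) θ) ^ 2 - 4 * (α θ s) ^ 2))
        (-2 * ∫ θ in (0:ℝ)..(2 * π), (deriv (fun s : ℝ => α θ s) t₀) ^ 2 / p θ t₀) t₀ := by
    intro t₀
    set Φ : ℝ × ℝ → ℝ := fun q => 2 * aθ q * aθt q - 8 * A q * at' q with hΦ_def
    have hΦ_cont : Continuous Φ := by
      apply Continuous.sub
      · exact (continuous_const.mul haθ_cont).mul haθt_cont
      · exact (continuous_const.mul hA_cont).mul hat_cont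
    -- bound on a compact set
    obtain ⟨C, hC⟩ : ∃ C, ∀ q ∈ (Set.uIcc (0:ℝ) (2 * π)) ×ˢ Metric.closedBall t₀ 1, ‖Φ q‖ ≤ C :=
      (isCompact_uIcc.prod (isCompact_closedBall t₀ 1)).exists_bound_of_continuousOn
        hΦ_cont.continuousOn
    have hDF : HasDerivAt (fun s : ℝ =>
          ∫ θ in (0:ℝ)..(2 * π), (aθ (θ, s) ^ 2 - 4 * (α θ s) ^ 2))
        (∫ θ in (0:ℝ)..(2 * π), Φ (θ, t₀)) t₀ := by
      refine (intervalIntegral.hasDerivAt_integral_of_dominated_loc_of_deriv_le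
        (F := fun s θ => aθ (θ, s) ^ 2 - 4 * (α θ s) ^ 2)
        (F' := fun s θ => Φ (θ, s)) (bound := fun _ => C)
        (Metric.ball_mem_nhds t₀ one_pos) ?_ ?_ ?_ ?_ ?_ ?_).2
      · filter_upwards with s
        exact (((contθ aθ haθ_cont s).pow 2).sub
          (continuous_const.mul ((hαθ_cont s).pow 2))).aestronglyMeasurable
      · exact (((contθ aθ haθ_cont t₀).pow 2).sub
          (continuous_const.mul ((hαθ_cont t₀).pow 2))).intervalIntegrable 0 (2 * π)
      · exact (hΦ_cont.comp (continuous_id.prodMk continuous_const)).aestronglyMeasurable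
      · filter_upwards with θ hθ x hx
        exact hC (θ, x) ⟨Set.uIoc_subset_uIcc hθ, Metric.ball_subset_closedBall hx⟩
      · exact intervalIntegrable_const
      · filter_upwards with θ hθ x hx
        have h1 : HasDerivAt (fun s => aθ (θ, s)) (aθt (θ, x)) x := hDθt θ x
        have h2 : HasDerivAt (fun s => α θ s) (at' (θ, x)) x := hDt θ x
        have h3 := (h1.pow 2).sub ((h2.pow 2).const_mul 4)
        convert h3 using 1
        show Φ (θ, x) = _
        rw [hΦ_def]
        show 2 * aθ (θ, x) * aθt (θ, x) - 8 * α θ x * at' (θ, x) = _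
        push_cast
        ring
        rfl
    -- integration by parts / value of the derivative
    set g : ℝ → ℝ := fun θ => aθ (θ, t₀) * at' (θ, t₀) with hg_def
    set g' : ℝ → ℝ := fun θ => aθθ (θ, t₀) * at' (θ, t₀) + aθ (θ, t₀) * aθt (θ, t₀) with hg'_def
    have hDg : ∀ θ : ℝ, HasDerivAt g (g' θ) θ := fun θ => (hDxx θ t₀).mul (hDtθ θ t₀)
    have hg'_cont : Continuous g' := by
      apply Continuous.add
      · exact (contθ aθθ haθθ_cont t₀).mul (contθ at' hat_cont t₀)
      · exact (contθ aθ haθ_cont t₀).mul (contθ aθt haθt_cont t₀)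
    have hintg' : (∫ θ in (0:ℝ)..(2 * π), g' θ) = 0 := by
      rw [intervalIntegral.integral_eq_sub_of_hasDerivAt (fun θ _ => hDg θ)
        (hg'_cont.intervalIntegrable 0 (2 * π))]
      have h2π : (2 * π : ℝ) = 0 + 2 * π := by ring
      rw [hg_def]
      simp only
      rw [h2π, hper_aθ, hper_at]
      ring
    set ψ : ℝ → ℝ := fun θ => -2 * (at' (θ, t₀) ^ 2 / p θ t₀) with hψ_def
    have hψ_cont : Continuous ψ := by
      apply continuous_const.mul
      exact ((contθ at' hat_cont t₀).pow 2).div (hp_cont t₀) fun θ => (hpos θ t₀).ne'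
    have hpoint : ∀ θ : ℝ, Φ (θ, t₀) = ψ θ + 2 * g' θ := by
      intro θ
      have hp0 : p θ t₀ ≠ 0 := (hpos θ t₀).ne'
      show 2 * aθ (θ, t₀) * aθt (θ, t₀) - 8 * α θ t₀ * at' (θ, t₀)
          = -2 * (at' (θ, t₀) ^ 2 / p θ t₀)
            + 2 * (aθθ (θ, t₀) * at' (θ, t₀) + aθ (θ, t₀) * aθt (θ, t₀))
      rw [hpde θ t₀]
      field_simp
      ring
    have hval : (∫ θ in (0:ℝ)..(2 * π), Φ (θ, t₀))
        = -2 * ∫ θ in (0:ℝ)..(2 * π), (deriv (fun s : ℝ => α θ s) t₀) ^ 2 / p θ t₀ := by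
      have h1 : (∫ θ in (0:ℝ)..(2 * π), Φ (θ, t₀))
          = (∫ θ in (0:ℝ)..(2 * π), ψ θ) + 2 * ∫ θ in (0:ℝ)..(2 * π), g' θ := by
        rw [← intervalIntegral.integral_const_mul,
          ← intervalIntegral.integral_add (hψ_cont.intervalIntegrable 0 (2 * π))
            ((show Continuous fun θ => 2 * g' θ from continuous_const.mul hg'_cont).intervalIntegrable 0 (2 * π))]
        exact intervalIntegral.integral_congr fun θ _ => hpoint θ
      rw [h1, hintg', mul_zero, add_zero]
      have h2 : (∫ θ in (0:ℝ)..(2 * π), ψ θ)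
          = -2 * ∫ θ in (0:ℝ)..(2 * π), at' (θ, t₀) ^ 2 / p θ t₀ := by
        simp only [hψ_def]
        rw [intervalIntegral.integral_const_mul]
      rw [h2]
      congr 1
      refine intervalIntegral.integral_congr fun θ _ => ?_
      rw [hderivt]
    have hFeq : (fun s : ℝ =>
        ∫ θ in (0:ℝ)..(2 * π), ((deriv (fun x : ℝ => α x s) θ) ^ 2 - 4 * (α θ s) ^ 2))
        = fun s : ℝ => ∫ θ in (0:ℝ)..(2 * π), (aθ (θ, s) ^ 2 - 4 * (α θ s) ^ 2) := by
      funext s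
      refine intervalIntegral.integral_congr fun θ _ => ?_
      rw [hderivx]
    rw [hFeq, ← hval]
    exact hDF
  refine ⟨fun t => (key t).deriv, ?_⟩
  apply antitone_of_deriv_nonpos
  · exact fun t => (key t).differentiableAt
  · intro t
    rw [(key t).deriv]
    have hnn : 0 ≤ ∫ θ in (0:ℝ)..(2 * π), (deriv (fun s : ℝ => α θ s) t) ^ 2 / p θ t := by
      apply intervalIntegral.integral_nonneg (by positivity)
      intro u _
      exact div_nonneg (sq_nonneg _) (hpos u t).le
    linarith
end

section
/- Suppose p(θ,t) = a(t)·(sin 2θ)/2 - b(t)·(cos 2θ)/2 + c(t) with a, b, c differentiable, and p satisfies p_t = p·p_θθ - (1/2)p_θ² + 2p² for all θ and t. Then a'(t) = b'(t) = 0 and c'(t) = 2c(t)² - (a² + b²)/2. -/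
/-!
For `p = A sin 2θ / 2 - B cos 2θ / 2 + C` one has `p_θθ = -4 (p - C)`, and with
`u = p - C`, `v = p_θ / 2` the right-hand side of the pressure equation becomes
`2C² - 2(u² + v²) = 2C² - (A² + B²)/2`, independent of `θ`. The equation therefore says that
the trigonometric polynomial `A' sin 2θ / 2 - B' cos 2θ / 2 + C'` is a constant, and its
coefficients are read off at `2θ = 0, π/2, π`.
-/

open Real

lemma hasDerivAt_sin_two_mul (x : ℝ) :
    HasDerivAt (fun y : ℝ => sin (2 * y)) (2 * cos (2 * x)) x := by
  simpa [mul_comm] using ((hasDerivAt_id' x).const_mul 2).sin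

lemma hasDerivAt_cos_two_mul (x : ℝ) :
    HasDerivAt (fun y : ℝ => cos (2 * y)) (-(2 * sin (2 * x))) x := by
  simpa [mul_comm] using ((hasDerivAt_id' x).const_mul 2).cos

lemma deriv_ansatz_angle (A B C : ℝ) :
    deriv (fun x : ℝ => A * sin (2 * x) / 2 - B * cos (2 * x) / 2 + C)
      = fun x => A * cos (2 * x) + B * sin (2 * x) := by
  funext x
  refine (((((hasDerivAt_sin_two_mul x).const_mul A).div_const 2).sub
    (((hasDerivAt_cos_two_mul x).const_mul B).div_const 2)).add_const C).deriv.trans ?_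
  ring

lemma deriv_deriv_ansatz_angle (A B C θ : ℝ) :
    deriv (deriv (fun x : ℝ => A * sin (2 * x) / 2 - B * cos (2 * x) / 2 + C)) θ
      = -2 * A * sin (2 * θ) + 2 * B * cos (2 * θ) := by
  rw [deriv_ansatz_angle]
  refine (((hasDerivAt_cos_two_mul θ).const_mul A).add
    ((hasDerivAt_sin_two_mul θ).const_mul B)).deriv.trans ?_
  ring

lemma deriv_ansatz_time {a b c : ℝ → ℝ} {t : ℝ} (ha : DifferentiableAt ℝ a t)
    (hb : DifferentiableAt ℝ b t) (hc : DifferentiableAt ℝ c t) (σ κ : ℝ) :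
    deriv (fun s : ℝ => a s * σ / 2 - b s * κ / 2 + c s) t
      = deriv a t * σ / 2 - deriv b t * κ / 2 + deriv c t :=
  (((ha.hasDerivAt.mul_const σ).div_const 2).sub
    ((hb.hasDerivAt.mul_const κ).div_const 2)).add hc.hasDerivAt |>.deriv

lemma pressure_rhs_ansatz (A B C θ : ℝ) :
    (A * sin (2 * θ) / 2 - B * cos (2 * θ) / 2 + C) *
        deriv (deriv (fun x : ℝ => A * sin (2 * x) / 2 - B * cos (2 * x) / 2 + C)) θ
      - (1 / 2) * (deriv (fun x : ℝ => A * sin (2 * x) / 2 - B * cos (2 * x) / 2 + C) θ) ^ 2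
      + 2 * (A * sin (2 * θ) / 2 - B * cos (2 * θ) / 2 + C) ^ 2
      = 2 * C ^ 2 - (A ^ 2 + B ^ 2) / 2 := by
  rw [deriv_deriv_ansatz_angle, deriv_ansatz_angle]
  linear_combination (-(A ^ 2 + B ^ 2) / 2) * sin_sq_add_cos_sq (2 * θ)

lemma coeffs_eq_zero_of_forall_sin_cos {α β γ : ℝ} (h : ∀ x : ℝ, α * sin x + β * cos x = γ) :
    α = 0 ∧ β = 0 ∧ γ = 0 := by
  have h0 := h 0
  have hπ := h π
  have hπ2 := h (π / 2)
  simp only [sin_zero, cos_zero, sin_pi, cos_pi, sin_pi_div_two, cos_pi_div_two] at h0 hπ hπ2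
  refine ⟨by linarith, by linarith, by linarith⟩

/-- Substituting the ansatz `p = a(t) sin 2θ / 2 - b(t) cos 2θ / 2 + c(t)` into the pressure
equation forces `a' = b' = 0` and `c' = 2c² - (a² + b²)/2`. -/
theorem ansatz_reduction (a b c : ℝ → ℝ)
    (ha : Differentiable ℝ a) (hb : Differentiable ℝ b) (hc : Differentiable ℝ c)
    (heq : ∀ θ t : ℝ,
      deriv (fun s : ℝ =>
          a s * Real.sin (2 * θ) / 2 - b s * Real.cos (2 * θ) / 2 + c s) t
        = (a t * Real.sin (2 * θ) / 2 - b t * Real.cos (2 * θ) / 2 + c t) *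
            deriv (deriv (fun x : ℝ =>
              a t * Real.sin (2 * x) / 2 - b t * Real.cos (2 * x) / 2 + c t)) θ
          - (1 / 2) * (deriv (fun x : ℝ =>
              a t * Real.sin (2 * x) / 2 - b t * Real.cos (2 * x) / 2 + c t) θ) ^ 2
          + 2 * (a t * Real.sin (2 * θ) / 2 - b t * Real.cos (2 * θ) / 2 + c t) ^ 2) :
    ∀ t : ℝ, deriv a t = 0 ∧ deriv b t = 0 ∧
      deriv c t = 2 * (c t) ^ 2 - ((a t) ^ 2 + (b t) ^ 2) / 2 := by
  intro t
  have hODE (θ : ℝ) : deriv a t * sin (2 * θ) / 2 - deriv b t * cos (2 * θ) / 2 + deriv c t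
      = 2 * c t ^ 2 - (a t ^ 2 + b t ^ 2) / 2 := by
    rw [← deriv_ansatz_time (ha t) (hb t) (hc t), heq, pressure_rhs_ansatz]
  obtain ⟨hA, hB, hC⟩ := coeffs_eq_zero_of_forall_sin_cos (α := deriv a t / 2)
    (β := -(deriv b t / 2)) (γ := 2 * c t ^ 2 - (a t ^ 2 + b t ^ 2) / 2 - deriv c t) fun x => by
      have := hODE (x / 2)
      rw [mul_div_cancel₀ x two_ne_zero] at this
      linarith
  exact ⟨by linarith, by linarith, by linarith⟩
end
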